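/- Let P1 and P2 be disjoint sets of vertices with c1 ∈ P1 and c2 ∈ P2, and let S = S(P1, P2, c1, c2) be the binary star graph. Then τ_{c1}(τ_{c2}(S)) − c1 is the simple graph whose edges are exactly: all pairs of distinct vertices both lying in P2, together with all pairs {u, z} with u ∈ P1 \ {c1} and z ∈ P2 \ {c2}. -/

import Mathlib

open SimpleGraph

universe u

/-- Local complementation of `G` at vertex `i`: adjacency is toggled exactly among
pairs of neighbors of `i`. -/
def localComp {V : Type u} (G : SimpleGraph V) (i : V) : SimpleGraph V where
  Adj a b := a ≠ b ∧
    ((G.Adj i a ∧ G.Adj i b) ∧ ¬ G.Adj a b ∨ ¬(G.Adj i a ∧ G.Adj i b) ∧ G.Adj a b)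
  symm := by
    constructor
    rintro a b ⟨hne, h⟩
    refine ⟨hne.symm, ?_⟩
    rcases h with ⟨⟨ha, hb⟩, hab⟩ | ⟨h1, h2⟩
    · exact Or.inl ⟨⟨hb, ha⟩, fun h => hab h.symm⟩
    · exact Or.inr ⟨fun h => h1 ⟨h.2, h.1⟩, h2.symm⟩
  loopless := ⟨fun a h => h.1 rfl⟩

/-- Vertex deletion `G − i`: remove every edge incident to `i` (the vertex stays,
isolated). -/
def delVert {V : Type u} (G : SimpleGraph V) (i : V) : SimpleGraph V where
  Adj a b := G.Adj a b ∧ a ≠ i ∧ b ≠ i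
  symm := ⟨fun _ _ ⟨h, ha, hb⟩ => ⟨h.symm, hb, ha⟩⟩
  loopless := ⟨fun a h => G.irrefl h.1⟩

/-- Deletion of a set `Z` of vertices: remove every edge incident to a vertex of `Z`. -/
def delSet {V : Type u} (G : SimpleGraph V) (Z : Set V) : SimpleGraph V where
  Adj a b := G.Adj a b ∧ a ∉ Z ∧ b ∉ Z
  symm := ⟨fun _ _ ⟨h, ha, hb⟩ => ⟨h.symm, hb, ha⟩⟩
  loopless := ⟨fun a h => G.irrefl h.1⟩

/-- Star graph on the set `W` with center `c`: edges are exactly the pairs `{c, u}`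
for `u ∈ W \ {c}`. -/
def starGraph {V : Type u} (W : Set V) (c : V) : SimpleGraph V :=
  SimpleGraph.fromRel (fun a b => a = c ∧ b ∈ W \ {c})

/-- Complete graph on the set `A`: edges are exactly all pairs of distinct elements
of `A`. -/
def completeOn {V : Type u} (A : Set V) : SimpleGraph V :=
  SimpleGraph.fromRel (fun a b => a ∈ A ∧ b ∈ A)

/-- Complete bipartite graph on parts `A` and `B`: edges are exactly the pairs
`{a, b}` with `a ∈ A` and `b ∈ B`. -/
def completeBipartiteOn {V : Type u} (A B : Set V) : SimpleGraph V :=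
  SimpleGraph.fromRel (fun a b => a ∈ A ∧ b ∈ B)

/-- Binary star graph `S(P1, P2, c1, c2)`: edges are exactly the pairs `{c1, u}`
with `u ∈ P2` together with the pairs `{u, c2}` with `u ∈ P1`. -/
def binaryStar {V : Type u} (P1 P2 : Set V) (c1 c2 : V) : SimpleGraph V :=
  SimpleGraph.fromRel (fun a b => (a = c1 ∧ b ∈ P2) ∨ (a ∈ P1 ∧ b = c2))

/-- The graph with the single edge `{c1, c2}`. -/
def singleEdge {V : Type u} (c1 c2 : V) : SimpleGraph V :=
  SimpleGraph.fromRel (fun a b => a = c1 ∧ b = c2)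

/-! In `S` the neighbourhood of `c2` is `P1`, an independent set, so `τ_{c2}` only adds a
clique on `P1`. In that graph the neighbourhood of `c1` is `(P1 \ {c1}) ∪ P2`; complementing there
creates the clique on `P2`, erases the clique on `P1 \ {c1}`, and flips the edges between
`P1 \ {c1}` and `P2`, of which only those to `c2` were present. Deleting `c1` then removes the
star at `c1`. -/

section

variable {V : Type u}

lemma localComp_adj_of_neighborSet_eq {G : SimpleGraph V} {i : V} {N : Set V}
    (hN : G.neighborSet i = N) {a b : V} :
    (localComp G i).Adj a b ↔ a ≠ b ∧ Xor (a ∈ N ∧ b ∈ N) (G.Adj a b) := by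
  subst hN
  simp only [localComp, mem_neighborSet, xor_def]
  tauto

lemma delVert_adj {G : SimpleGraph V} {i a b : V} :
    (delVert G i).Adj a b ↔ G.Adj a b ∧ a ≠ i ∧ b ≠ i :=
  Iff.rfl

lemma completeOn_adj {A : Set V} {a b : V} :
    (completeOn A).Adj a b ↔ a ≠ b ∧ a ∈ A ∧ b ∈ A := by
  simp only [completeOn, fromRel_adj]
  tauto

lemma localComp_eq_sup_completeOn_of_isIndepSet {G : SimpleGraph V} {i : V}
    (hind : G.IsIndepSet (G.neighborSet i)) :
    localComp G i = G ⊔ completeOn (G.neighborSet i) := by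
  ext a b
  rw [localComp_adj_of_neighborSet_eq rfl, sup_adj, completeOn_adj, xor_def]
  have hnot : a ∈ G.neighborSet i ∧ b ∈ G.neighborSet i → ¬G.Adj a b :=
    fun h hab => hind h.1 h.2 hab.ne hab
  have hne : G.Adj a b → a ≠ b := Adj.ne
  tauto

section binaryStar

variable {P1 P2 : Set V} {c1 c2 : V}

lemma binaryStar_adj {a b : V} :
    (binaryStar P1 P2 c1 c2).Adj a b ↔
      a ≠ b ∧
        (a = c1 ∧ b ∈ P2 ∨ a ∈ P1 ∧ b = c2 ∨ b = c1 ∧ a ∈ P2 ∨ b ∈ P1 ∧ a = c2) := by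
  simp only [binaryStar, fromRel_adj]
  tauto

lemma neighborSet_binaryStar_right (hdisj : Disjoint P1 P2) (hc1 : c1 ∈ P1) (hc2 : c2 ∈ P2) :
    (binaryStar P1 P2 c1 c2).neighborSet c2 = P1 := by
  have hd := Set.disjoint_left.mp hdisj
  ext x
  simp only [mem_neighborSet, binaryStar_adj]
  grind

lemma isIndepSet_binaryStar_left (hdisj : Disjoint P1 P2) (hc2 : c2 ∈ P2) :
    (binaryStar P1 P2 c1 c2).IsIndepSet P1 := by
  have hd := Set.disjoint_left.mp hdisj
  intro a ha b hb _
  simp only [binaryStar_adj]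
  grind

lemma localComp_binaryStar_right (hdisj : Disjoint P1 P2) (hc1 : c1 ∈ P1) (hc2 : c2 ∈ P2) :
    localComp (binaryStar P1 P2 c1 c2) c2 = binaryStar P1 P2 c1 c2 ⊔ completeOn P1 := by
  have hN := neighborSet_binaryStar_right hdisj hc1 hc2
  have hind : (binaryStar P1 P2 c1 c2).IsIndepSet ((binaryStar P1 P2 c1 c2).neighborSet c2) := by
    rw [hN]
    exact isIndepSet_binaryStar_left hdisj hc2
  rw [localComp_eq_sup_completeOn_of_isIndepSet hind, hN]

lemma neighborSet_binaryStar_sup_completeOn_left (hdisj : Disjoint P1 P2) (hc1 : c1 ∈ P1)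
    (hc2 : c2 ∈ P2) :
    (binaryStar P1 P2 c1 c2 ⊔ completeOn P1).neighborSet c1 = P1 \ {c1} ∪ P2 := by
  have hd := Set.disjoint_left.mp hdisj
  ext x
  simp only [mem_neighborSet, sup_adj, binaryStar_adj, completeOn_adj, Set.mem_union,
    Set.mem_sdiff, Set.mem_singleton_iff]
  grind

end binaryStar

end

/-- `τ_{c1}(τ_{c2}(S)) − c1` is the simple graph whose edges are
exactly: all pairs of distinct vertices both lying in `P2`, together with all pairs
`{u, z}` with `u ∈ P1 \ {c1}` and `z ∈ P2 \ {c2}`. -/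
theorem stmt_14 {V : Type u} (P1 P2 : Set V) (hdisj : Disjoint P1 P2)
    (c1 c2 : V) (hc1 : c1 ∈ P1) (hc2 : c2 ∈ P2) :
    delVert (localComp (localComp (binaryStar P1 P2 c1 c2) c2) c1) c1 =
      SimpleGraph.fromRel (fun a b =>
        (a ∈ P2 ∧ b ∈ P2) ∨ (a ∈ P1 \ {c1} ∧ b ∈ P2 \ {c2})) := by
  have hd := Set.disjoint_left.mp hdisj
  rw [localComp_binaryStar_right hdisj hc1 hc2]
  ext a b
  rw [delVert_adj, localComp_adj_of_neighborSet_eq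
    (neighborSet_binaryStar_sup_completeOn_left hdisj hc1 hc2)]
  simp only [sup_adj, binaryStar_adj, completeOn_adj, fromRel_adj, Set.mem_union, Set.mem_sdiff,
    Set.mem_singleton_iff, xor_def]
  grind
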